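/- Let Γ be a finite group, R a braided Hopf algebra in ^Γ_Γ𝒴𝒟, A = R#kΓ, and 𝒟 ⊆ A^e the subalgebra generated by the elements (r#g)⊗(s#g⁻¹) with r,s ∈ R, g ∈ Γ. Then Hom_{R^e}(𝒟, R^e) ≅ 𝒟 as A-R^e-bimodules, where the left A-module structure on 𝒟 comes from the embedding ρ(a) = a₁⊗S_A(a₂) into A^e, and the A-R^e-bimodule structure on Hom_{R^e}(𝒟, R^e) is induced from the right A-module structure of 𝒟 and the right R^e-module structure of R^e. -/

import Mathlib

set_option synthInstance.maxHeartbeats 1000000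
set_option maxHeartbeats 1600000
open scoped TensorProduct
open TensorProduct

noncomputable section

/-- `IsRepr k x a b` says that `∑ i, a i ⊗ b i` is a representation of the element `x`
of a tensor product as a finite sum of pure tensors. -/
def IsRepr (k : Type) [CommRing k] {M N : Type} [AddCommGroup M] [Module k M]
    [AddCommGroup N] [Module k N] (x : M ⊗[k] N) {n : ℕ}
    (a : Fin n → M) (b : Fin n → N) : Prop :=
  x = ∑ i, a i ⊗ₜ[k] b i

end
open scoped TensorProduct
open TensorProduct

noncomputable section

variable (k Γ R : Type) [Field k] [Group Γ] [Fintype Γ] [DecidableEq Γ]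
  [Ring R] [Algebra k R]

/-- A braided Hopf algebra `R` in the Yetter-Drinfeld category `{}^Γ_Γ\mathcal{YD}` over
the group algebra of a finite group `Γ`: a `Γ`-graded algebra (`proj g` is the projection
onto the homogeneous component `R_g`) carrying a `Γ`-action by algebra automorphisms with
`h ⋅ R_g = R_{hgh⁻¹}`, together with a comultiplication, counit and antipode making it a
braided Hopf algebra, the braiding being `c(x ⊗ y) = (g ⋅ y) ⊗ x` for `x ∈ R_g`. -/
structure GammaBraidedHopf : Type where
  /-- the `Γ`-action by algebra automorphisms -/
  act : Γ →* (R ≃ₐ[k] R)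
  /-- the projection onto the degree `g` homogeneous component -/
  proj : Γ → (R →ₗ[k] R)
  proj_sum : ∀ r : R, ∑ g : Γ, proj g r = r
  proj_proj : ∀ (g h : Γ) (r : R), proj g (proj h r) = if g = h then proj h r else 0
  /-- the grading is an algebra grading: `R_g R_h ⊆ R_{gh}` -/
  proj_mul : ∀ (g h : Γ) (r s : R), proj g r = r → proj h s = s →
    proj (g * h) (r * s) = r * s
  proj_one_one : proj 1 1 = 1
  /-- compatibility of action and grading: `h ⋅ R_g = R_{hgh⁻¹}` -/
  act_proj : ∀ (h g : Γ) (r : R), proj g r = r →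
    proj (h * g * h⁻¹) (act h r) = act h r
  /-- the comultiplication of `R` -/
  comulR : R →ₗ[k] R ⊗[k] R
  /-- the counit of `R` -/
  counitR : R →ₗ[k] k
  comulR_coassoc : ∀ (r : R) {n : ℕ} (r1 r2 : Fin n → R), IsRepr k (comulR r) r1 r2 →
      ∑ i, (TensorProduct.assoc k R R R) (comulR (r1 i) ⊗ₜ[k] r2 i)
        = ∑ i, r1 i ⊗ₜ[k] comulR (r2 i)
  comulR_counit_left : ∀ (r : R) {n : ℕ} (r1 r2 : Fin n → R), IsRepr k (comulR r) r1 r2 →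
      ∑ i, counitR (r1 i) • r2 i = r
  comulR_counit_right : ∀ (r : R) {n : ℕ} (r1 r2 : Fin n → R), IsRepr k (comulR r) r1 r2 →
      ∑ i, counitR (r2 i) • r1 i = r
  /-- `Δ_R` is an algebra map for the braided multiplication on `R ⊗ R`:
  `Δ_R(rs) = Σ_g (r¹ (g ⋅ s¹)) ⊗ ((r²)_g s²)` -/
  comulR_braided_mul : ∀ (r s : R) {n : ℕ} (r1 r2 : Fin n → R) {m : ℕ}
      (s1 s2 : Fin m → R),
    IsRepr k (comulR r) r1 r2 → IsRepr k (comulR s) s1 s2 →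
      comulR (r * s) = ∑ i, ∑ i', ∑ g : Γ,
        (r1 i * act g (s1 i')) ⊗ₜ[k] (proj g (r2 i) * s2 i')
  comulR_one : comulR 1 = 1 ⊗ₜ[k] 1
  counitR_mul : ∀ r s : R, counitR (r * s) = counitR r * counitR s
  counitR_one : counitR 1 = 1
  /-- the comultiplication is `Γ`-equivariant -/
  comulR_equivariant : ∀ (h : Γ) (r : R),
    comulR (act h r)
      = TensorProduct.map (act h).toLinearMap (act h).toLinearMap (comulR r)
  counitR_equivariant : ∀ (h : Γ) (r : R), counitR (act h r) = counitR r
  /-- the comultiplication is graded: `Δ_R(R_g) ⊆ ⊕_{st = g} R_s ⊗ R_t` -/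
  comulR_graded : ∀ (g : Γ) (r : R), proj g r = r → ∀ s t : Γ, s * t ≠ g →
    TensorProduct.map (proj s) (proj t) (comulR r) = 0
  counitR_graded : ∀ (g : Γ) (r : R), g ≠ 1 → counitR (proj g r) = 0
  /-- the antipode of `R` -/
  antipodeR : R →ₗ[k] R
  antipodeR_left : ∀ (r : R) {n : ℕ} (r1 r2 : Fin n → R), IsRepr k (comulR r) r1 r2 →
      ∑ i, antipodeR (r1 i) * r2 i = counitR r • (1 : R)
  antipodeR_right : ∀ (r : R) {n : ℕ} (r1 r2 : Fin n → R), IsRepr k (comulR r) r1 r2 →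
      ∑ i, r1 i * antipodeR (r2 i) = counitR r • (1 : R)

variable (A : Type) [Ring A] [HopfAlgebra k A]

/-- The Radford biproduct (bosonization) `A = R # kΓ` of a braided Hopf algebra `R` in
`{}^Γ_Γ\mathcal{YD}`: the Hopf algebra `A` is identified, via the `k`-linear isomorphism
`e`, with `R ⊗ kΓ`, in such a way that the multiplication, unit, comultiplication and
counit of `A` are the ones of the Radford biproduct. -/
structure GammaBosonization extends GammaBraidedHopf k Γ R : Type where
  /-- the identification of `A` with `R ⊗ kΓ`. -/
  e : R ⊗[k] MonoidAlgebra k Γ ≃ₗ[k] A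
  e_one : e (1 ⊗ₜ[k] MonoidAlgebra.single 1 1) = 1
  /-- `(r # g)(s # h) = r (g ⋅ s) # gh` -/
  e_mul : ∀ (r s : R) (g h : Γ),
    e (r ⊗ₜ[k] MonoidAlgebra.single g 1) * e (s ⊗ₜ[k] MonoidAlgebra.single h 1)
      = e ((r * act g s) ⊗ₜ[k] MonoidAlgebra.single (g * h) 1)
  e_counit : ∀ (r : R) (h : Γ),
    Coalgebra.counit (R := k) (e (r ⊗ₜ[k] MonoidAlgebra.single h 1)) = counitR r
  /-- `Δ_A(r # h) = Σ_g (r¹ # gh) ⊗ ((r²)_g # h)` -/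
  e_comul : ∀ (r : R) (h : Γ) {n : ℕ} (r1 r2 : Fin n → R), IsRepr k (comulR r) r1 r2 →
    Coalgebra.comul (R := k) (e (r ⊗ₜ[k] MonoidAlgebra.single h 1))
      = ∑ i, ∑ g : Γ, e (r1 i ⊗ₜ[k] MonoidAlgebra.single (g * h) 1)
          ⊗ₜ[k] e (proj g (r2 i) ⊗ₜ[k] MonoidAlgebra.single h 1)

end
noncomputable section

/-- The algebra embedding `ρ : A → A^e`, `ρ(a) = a₁ ⊗ S_A(a₂)`, of a Hopf algebra into
its enveloping algebra (here given as a `k`-linear map). -/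
def hopfRho (k A : Type) [Field k] [Ring A] [HopfAlgebra k A] : A →ₗ[k] A ⊗[k] Aᵐᵒᵖ :=
  (TensorProduct.map LinearMap.id
      ((MulOpposite.opLinearEquiv k).toLinearMap ∘ₗ HopfAlgebra.antipode (R := k))) ∘ₗ
    Coalgebra.comul (R := k)

end
noncomputable section

/-- The subalgebra `𝒟 ⊆ A^e` generated by the elements `(r # g) ⊗ (s # g⁻¹)`, for the
Radford biproduct `A = R # kΓ`. -/
def DSub (k Γ R A : Type) [Field k] [Group Γ] [Fintype Γ] [DecidableEq Γ]
    [Ring R] [Algebra k R] [Ring A] [HopfAlgebra k A]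
    (B : GammaBosonization k Γ R A) : Subalgebra k (A ⊗[k] Aᵐᵒᵖ) :=
  Algebra.adjoin k {x | ∃ (r s : R) (g : Γ),
    x = B.e (r ⊗ₜ[k] MonoidAlgebra.single g 1)
        ⊗ₜ[k] MulOpposite.op (B.e (s ⊗ₜ[k] MonoidAlgebra.single g⁻¹ 1))}

end
noncomputable section

/-- The embedding `R → A = R # kΓ`, `r ↦ r # 1`. -/
def iotaR (k Γ R A : Type) [Field k] [Group Γ] [Fintype Γ] [DecidableEq Γ]
    [Ring R] [Algebra k R] [Ring A] [HopfAlgebra k A]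
    (B : GammaBosonization k Γ R A) : R →ₗ[k] A :=
  B.e.toLinearMap ∘ₗ
    ((TensorProduct.mk k R (MonoidAlgebra k Γ)).flip (MonoidAlgebra.single 1 1))

end
noncomputable section

/-- The induced embedding `R^e → A^e`. -/
def embRe (k Γ R A : Type) [Field k] [Group Γ] [Fintype Γ] [DecidableEq Γ]
    [Ring R] [Algebra k R] [Ring A] [HopfAlgebra k A]
    (B : GammaBosonization k Γ R A) : R ⊗[k] Rᵐᵒᵖ →ₗ[k] A ⊗[k] Aᵐᵒᵖ :=
  TensorProduct.map (iotaR k Γ R A B)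
    ((MulOpposite.opLinearEquiv k).toLinearMap ∘ₗ iotaR k Γ R A B ∘ₗ
      (MulOpposite.opLinearEquiv k).symm.toLinearMap)

/-- The property, for a map `F : 𝒟 → R^e`, of being left `R^e`-linear (where `R^e` acts
on `𝒟` through the embedding `R^e → A^e` and left multiplication). -/
def IsReLinear (k Γ R A : Type) [Field k] [Group Γ] [Fintype Γ] [DecidableEq Γ]
    [Ring R] [Algebra k R] [Ring A] [HopfAlgebra k A]
    (B : GammaBosonization k Γ R A)
    (F : ↥(DSub k Γ R A B) →ₗ[k] (R ⊗[k] Rᵐᵒᵖ)) : Prop :=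
  ∀ (z : R ⊗[k] Rᵐᵒᵖ) (x y : ↥(DSub k Γ R A B)),
    (y : A ⊗[k] Aᵐᵒᵖ) = embRe k Γ R A B z * (x : A ⊗[k] Aᵐᵒᵖ) → F y = z * F x

end

/-! `𝒟` is the smash product `R^e # kΓ`: it is spanned by the normal forms `z * diag γ`
(`z ∈ R^e`, `diag γ = (1 # γ) ⊗ (1 # γ⁻¹)`), and the coordinate maps `coeffD γ` show that it is
free as a left `R^e`-module on the `diag γ`. The `diag 1`-coordinate of products,
`Θ x y = coeffD 1 (y x)`, is then a nondegenerate pairing: `Θ x (diag γ) = γ ⋅ coeffD γ⁻¹ x`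
recovers all coordinates of `x`, and an `R^e`-linear `F` equals `Θ x` for
`x = Σ_γ (γ ⋅ F (diag γ⁻¹)) * diag γ`. Compatibility with the `A`-actions through `ρ` is just
associativity of multiplication in `A^e`. -/

open MulOpposite

noncomputable section

variable {k Γ R A : Type} [Field k] [Group Γ] [Fintype Γ] [DecidableEq Γ] [Ring R] [Algebra k R]
  [Ring A] [HopfAlgebra k A]

namespace GammaBosonization

variable (B : GammaBosonization k Γ R A)

/-- `B.smash γ r` is the element `r # γ` of `A`. -/
def smash (γ : Γ) : R →ₗ[k] A :=
  B.e.toLinearMap ∘ₗ (TensorProduct.mk k R (MonoidAlgebra k Γ)).flip (MonoidAlgebra.single γ 1)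

theorem e_tmul_single (r : R) (γ : Γ) :
    B.e (r ⊗ₜ[k] MonoidAlgebra.single γ 1) = B.smash γ r := rfl

theorem smash_mul_smash (g h : Γ) (r s : R) :
    B.smash g r * B.smash h s = B.smash (g * h) (r * B.act g s) :=
  B.e_mul r s g h

theorem smash_one_one : B.smash 1 (1 : R) = 1 := B.e_one

def coeff (γ : Γ) : A →ₗ[k] R :=
  (TensorProduct.rid k R).toLinearMap ∘ₗ
    TensorProduct.map LinearMap.id
      (Finsupp.lapply γ ∘ₗ (MonoidAlgebra.coeffLinearEquiv k).toLinearMap) ∘ₗ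
    B.e.symm.toLinearMap

theorem coeff_smash (γ δ : Γ) (r : R) : B.coeff γ (B.smash δ r) = if γ = δ then r else 0 := by
  rw [coeff, smash]
  simp [MonoidAlgebra.coeffLinearEquiv, Finsupp.single_apply, eq_comm]

def incl : R →ₐ[k] A :=
  AlgHom.ofLinearMap (B.smash 1) B.smash_one_one fun r s => by
    rw [smash_mul_smash, one_mul, map_one, AlgEquiv.one_apply]

def inclE : R ⊗[k] Rᵐᵒᵖ →ₐ[k] A ⊗[k] Aᵐᵒᵖ :=
  Algebra.TensorProduct.map B.incl (AlgHom.op B.incl)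

theorem inclE_tmul (r : R) (m : Rᵐᵒᵖ) :
    B.inclE (r ⊗ₜ[k] m) = B.smash 1 r ⊗ₜ[k] op (B.smash 1 m.unop) := rfl

theorem embRe_eq_inclE : embRe k Γ R A B = B.inclE.toLinearMap :=
  TensorProduct.ext' fun _ _ => rfl

def actE (γ : Γ) : R ⊗[k] Rᵐᵒᵖ ≃ₐ[k] R ⊗[k] Rᵐᵒᵖ :=
  Algebra.TensorProduct.congr (B.act γ) (AlgEquiv.op (B.act γ))

theorem actE_tmul (γ : Γ) (r : R) (m : Rᵐᵒᵖ) :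
    B.actE γ (r ⊗ₜ[k] m) = B.act γ r ⊗ₜ[k] op (B.act γ m.unop) := rfl

@[simp]
theorem actE_actE (γ δ : Γ) (z : R ⊗[k] Rᵐᵒᵖ) : B.actE γ (B.actE δ z) = B.actE (γ * δ) z := by
  induction z using TensorProduct.induction_on with
  | zero => simp
  | add x y hx hy => simp only [map_add, hx, hy]
  | tmul r m => simp only [actE_tmul, unop_op, map_mul, AlgEquiv.mul_apply]

@[simp]
theorem actE_one (z : R ⊗[k] Rᵐᵒᵖ) : B.actE 1 z = z := by
  induction z using TensorProduct.induction_on with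
  | zero => simp
  | add x y hx hy => simp only [map_add, hx, hy]
  | tmul r m => simp [actE_tmul]

def diag (γ : Γ) : A ⊗[k] Aᵐᵒᵖ := B.smash γ 1 ⊗ₜ[k] op (B.smash γ⁻¹ 1)

theorem diag_mul_diag (γ δ : Γ) : B.diag γ * B.diag δ = B.diag (γ * δ) := by
  simp [diag, smash_mul_smash, ← op_mul]

@[simp]
theorem diag_one : B.diag 1 = (1 : A ⊗[k] Aᵐᵒᵖ) := by
  simp [diag, smash_one_one, Algebra.TensorProduct.one_def]

theorem inclE_tmul_mul_diag (γ : Γ) (r : R) (m : Rᵐᵒᵖ) :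
    B.inclE (r ⊗ₜ[k] m) * B.diag γ
      = B.smash γ r ⊗ₜ[k] op (B.smash γ⁻¹ (B.act γ⁻¹ m.unop)) := by
  simp [inclE_tmul, diag, smash_mul_smash, ← op_mul]

theorem diag_mul_inclE (γ : Γ) (z : R ⊗[k] Rᵐᵒᵖ) :
    B.diag γ * B.inclE z = B.inclE (B.actE γ z) * B.diag γ := by
  induction z using TensorProduct.induction_on with
  | zero => simp
  | add x y hx hy => simp only [map_add, mul_add, add_mul, hx, hy]
  | tmul r m =>
    rw [actE_tmul, inclE_tmul_mul_diag]
    simp [inclE_tmul, diag, smash_mul_smash, ← op_mul]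

theorem inclE_mul_diag_mul_inclE_mul_diag (z w : R ⊗[k] Rᵐᵒᵖ) (γ δ : Γ) :
    B.inclE z * B.diag γ * (B.inclE w * B.diag δ)
      = B.inclE (z * B.actE γ w) * B.diag (γ * δ) := by
  rw [← diag_mul_diag, map_mul, mul_assoc, ← mul_assoc (B.diag γ), diag_mul_inclE]
  simp only [mul_assoc]

theorem generator_mem_DSub (γ : Γ) (r s : R) :
    B.smash γ r ⊗ₜ[k] op (B.smash γ⁻¹ s) ∈ DSub k Γ R A B :=
  Algebra.subset_adjoin ⟨r, s, γ, rfl⟩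

theorem inclE_mem_DSub (z : R ⊗[k] Rᵐᵒᵖ) : B.inclE z ∈ DSub k Γ R A B := by
  induction z using TensorProduct.induction_on with
  | zero => simp
  | add x y hx hy => rw [map_add]; exact Subalgebra.add_mem _ hx hy
  | tmul r m => simpa [inclE_tmul] using B.generator_mem_DSub 1 r m.unop

theorem diag_mem_DSub (γ : Γ) : B.diag γ ∈ DSub k Γ R A B := B.generator_mem_DSub γ 1 1

def normalForms : Submodule k (A ⊗[k] Aᵐᵒᵖ) :=
  Submodule.span k {x | ∃ z γ, x = B.inclE z * B.diag γ}

theorem mul_mem_normalForms {x y : A ⊗[k] Aᵐᵒᵖ} (hx : x ∈ B.normalForms)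
    (hy : y ∈ B.normalForms) : x * y ∈ B.normalForms := by
  have hxy := Submodule.mul_mem_mul hx hy
  rw [normalForms, Submodule.span_mul_span] at hxy
  refine Submodule.span_mono (Set.mul_subset_iff.2 ?_) hxy
  rintro _ ⟨z, γ, rfl⟩ _ ⟨w, δ, rfl⟩
  exact ⟨_, _, B.inclE_mul_diag_mul_inclE_mul_diag z w γ δ⟩

theorem mem_normalForms_of_mem_DSub {x : A ⊗[k] Aᵐᵒᵖ} (hx : x ∈ DSub k Γ R A B) :
    x ∈ B.normalForms := by
  let N : Subalgebra k (A ⊗[k] Aᵐᵒᵖ) := B.normalForms.toSubalgebra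
    (Submodule.subset_span ⟨1, 1, by simp⟩) fun _ _ => B.mul_mem_normalForms
  refine Algebra.adjoin_le (S := N) ?_ hx
  rintro _ ⟨r, s, γ, rfl⟩
  refine Submodule.subset_span ⟨r ⊗ₜ[k] op (B.act γ s), γ, ?_⟩
  simp [inclE_tmul_mul_diag, e_tmul_single]

/-- The `R^e`-coefficient of `diag γ`, normalised by
`(r # γ) ⊗ (s # γ⁻¹) = inclE (r ⊗ γ ⋅ s) * diag γ`. -/
def coeffD (γ : Γ) : A ⊗[k] Aᵐᵒᵖ →ₗ[k] R ⊗[k] Rᵐᵒᵖ :=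
  TensorProduct.map (B.coeff γ)
    ((opLinearEquiv k).toLinearMap ∘ₗ (B.act γ).toLinearMap ∘ₗ B.coeff γ⁻¹ ∘ₗ
      (opLinearEquiv k).symm.toLinearMap)

theorem coeffD_inclE_mul_diag (γ δ : Γ) (z : R ⊗[k] Rᵐᵒᵖ) :
    B.coeffD γ (B.inclE z * B.diag δ) = if γ = δ then z else 0 := by
  induction z using TensorProduct.induction_on with
  | zero => simp
  | add x y hx hy => rw [map_add, add_mul, map_add, hx, hy]; split_ifs <;> simp
  | tmul r m =>
    rw [inclE_tmul_mul_diag]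
    split_ifs with h
    · subst h; simp [coeffD, coeff_smash]
    · simp [coeffD, coeff_smash, h]

theorem eqOn_normalForms {M : Type} [AddCommMonoid M] [Module k M]
    {f g : A ⊗[k] Aᵐᵒᵖ →ₗ[k] M} (h : ∀ z γ, f (B.inclE z * B.diag γ) = g (B.inclE z * B.diag γ))
    {x : A ⊗[k] Aᵐᵒᵖ} (hx : x ∈ B.normalForms) : f x = g x :=
  LinearMap.eqOn_span (by rintro _ ⟨z, γ, rfl⟩; exact h z γ) hx

theorem sum_inclE_coeffD_mul_diag {x : A ⊗[k] Aᵐᵒᵖ} (hx : x ∈ B.normalForms) :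
    ∑ γ : Γ, B.inclE (B.coeffD γ x) * B.diag γ = x := by
  have := B.eqOn_normalForms (f := ∑ γ : Γ, LinearMap.mulRight k (B.diag γ) ∘ₗ
    B.inclE.toLinearMap ∘ₗ B.coeffD γ) (g := LinearMap.id) (fun z δ => ?_) hx
  · simpa using this
  · simp [coeffD_inclE_mul_diag, apply_ite]

theorem coeffD_inclE_mul (γ : Γ) (z : R ⊗[k] Rᵐᵒᵖ) {y : A ⊗[k] Aᵐᵒᵖ}
    (hy : y ∈ B.normalForms) : B.coeffD γ (B.inclE z * y) = z * B.coeffD γ y := by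
  refine B.eqOn_normalForms (f := B.coeffD γ ∘ₗ LinearMap.mulLeft k (B.inclE z))
    (g := LinearMap.mulLeft k z ∘ₗ B.coeffD γ) (fun w δ => ?_) hy
  simp [← mul_assoc, ← map_mul, coeffD_inclE_mul_diag]

theorem coeffD_mul_inclE (γ : Γ) (z : R ⊗[k] Rᵐᵒᵖ) {y : A ⊗[k] Aᵐᵒᵖ}
    (hy : y ∈ B.normalForms) : B.coeffD γ (y * B.inclE z) = B.coeffD γ y * B.actE γ z := by
  refine B.eqOn_normalForms (f := B.coeffD γ ∘ₗ LinearMap.mulRight k (B.inclE z))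
    (g := LinearMap.mulRight k (B.actE γ z) ∘ₗ B.coeffD γ) (fun w δ => ?_) hy
  simp only [LinearMap.comp_apply, LinearMap.mulRight_apply]
  rw [mul_assoc, diag_mul_inclE, ← mul_assoc, ← map_mul, coeffD_inclE_mul_diag,
    coeffD_inclE_mul_diag]
  split_ifs with h
  · rw [h]
  · simp

theorem coeffD_diag_mul (γ δ : Γ) {y : A ⊗[k] Aᵐᵒᵖ} (hy : y ∈ B.normalForms) :
    B.coeffD γ (B.diag δ * y) = B.actE δ (B.coeffD (δ⁻¹ * γ) y) := by
  refine B.eqOn_normalForms (f := B.coeffD γ ∘ₗ LinearMap.mulLeft k (B.diag δ))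
    (g := (B.actE δ).toLinearMap ∘ₗ B.coeffD (δ⁻¹ * γ)) (fun w ε => ?_) hy
  simp only [LinearMap.comp_apply, LinearMap.mulLeft_apply, AlgEquiv.toLinearMap_apply]
  rw [← mul_assoc, diag_mul_inclE, mul_assoc, diag_mul_diag, coeffD_inclE_mul_diag,
    coeffD_inclE_mul_diag]
  simp only [inv_mul_eq_iff_eq_mul]
  split_ifs <;> simp

def theta : DSub k Γ R A B →ₗ[k] DSub k Γ R A B →ₗ[k] R ⊗[k] Rᵐᵒᵖ :=
  ((LinearMap.mul k (A ⊗[k] Aᵐᵒᵖ)).flip.compl₁₂ (DSub k Γ R A B).val.toLinearMap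
    (DSub k Γ R A B).val.toLinearMap).compr₂ (B.coeffD 1)

theorem theta_apply (x y : DSub k Γ R A B) :
    B.theta x y = B.coeffD 1 ((y : A ⊗[k] Aᵐᵒᵖ) * x) := rfl

theorem theta_diag (x : DSub k Γ R A B) (γ : Γ) :
    B.theta x ⟨B.diag γ, B.diag_mem_DSub γ⟩ = B.actE γ (B.coeffD γ⁻¹ x) := by
  rw [theta_apply, coeffD_diag_mul _ _ _ (B.mem_normalForms_of_mem_DSub x.2), mul_one]

theorem theta_injective : Function.Injective B.theta := by
  intro x y hxy
  have hcoeff : ∀ γ : Γ, B.coeffD γ x = B.coeffD γ y := by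
    intro γ
    have h := LinearMap.congr_fun hxy ⟨B.diag γ⁻¹, B.diag_mem_DSub γ⁻¹⟩
    rw [theta_diag, theta_diag, inv_inv] at h
    exact (B.actE γ⁻¹).injective h
  apply Subtype.ext
  rw [← B.sum_inclE_coeffD_mul_diag (B.mem_normalForms_of_mem_DSub x.2),
    ← B.sum_inclE_coeffD_mul_diag (B.mem_normalForms_of_mem_DSub y.2)]
  simp only [hcoeff]

theorem isReLinear_theta (x : DSub k Γ R A B) : IsReLinear k Γ R A B (B.theta x) := by
  intro z y y' hy'
  rw [theta_apply, theta_apply, hy', embRe_eq_inclE, AlgHom.toLinearMap_apply, mul_assoc,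
    coeffD_inclE_mul _ _ _ (B.mem_normalForms_of_mem_DSub (mul_mem y.2 x.2))]

end GammaBosonization

theorem IsReLinear.ext {B : GammaBosonization k Γ R A} {F G : DSub k Γ R A B →ₗ[k] R ⊗[k] Rᵐᵒᵖ}
    (hF : IsReLinear k Γ R A B F) (hG : IsReLinear k Γ R A B G)
    (h : ∀ γ, F ⟨B.diag γ, B.diag_mem_DSub γ⟩ = G ⟨B.diag γ, B.diag_mem_DSub γ⟩) : F = G := by
  ext y
  have hmem : ∀ γ, B.inclE (B.coeffD γ y) * B.diag γ ∈ DSub k Γ R A B := fun γ =>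
    mul_mem (B.inclE_mem_DSub _) (B.diag_mem_DSub γ)
  have hy : y = ∑ γ : Γ, ⟨_, hmem γ⟩ :=
    Subtype.ext (by simp [B.sum_inclE_coeffD_mul_diag (B.mem_normalForms_of_mem_DSub y.2)])
  rw [hy, map_sum, map_sum]
  refine Finset.sum_congr rfl fun γ _ => ?_
  have hγ : ((⟨_, hmem γ⟩ : DSub k Γ R A B) : A ⊗[k] Aᵐᵒᵖ)
      = embRe k Γ R A B (B.coeffD γ y) * B.diag γ := by
    rw [B.embRe_eq_inclE]; rfl
  rw [hF _ ⟨B.diag γ, B.diag_mem_DSub γ⟩ _ hγ, hG _ ⟨B.diag γ, B.diag_mem_DSub γ⟩ _ hγ, h]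

namespace GammaBosonization

variable (B : GammaBosonization k Γ R A)

theorem exists_theta_eq {F : DSub k Γ R A B →ₗ[k] R ⊗[k] Rᵐᵒᵖ}
    (hF : IsReLinear k Γ R A B F) : ∃ x, B.theta x = F := by
  let x : DSub k Γ R A B := ∑ γ : Γ,
    ⟨B.inclE (B.actE γ (F ⟨B.diag γ⁻¹, B.diag_mem_DSub γ⁻¹⟩)) * B.diag γ,
      mul_mem (B.inclE_mem_DSub _) (B.diag_mem_DSub γ)⟩
  have hx : ∀ γ, B.coeffD γ x = B.actE γ (F ⟨B.diag γ⁻¹, B.diag_mem_DSub γ⁻¹⟩) := fun γ => by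
    simp [x, coeffD_inclE_mul_diag]
  refine ⟨x, IsReLinear.ext (B.isReLinear_theta x) hF fun γ => ?_⟩
  rw [theta_diag, hx, actE_actE, mul_inv_cancel, actE_one, inv_inv]

theorem theta_apply_eq_of_mul_eq (d : A ⊗[k] Aᵐᵒᵖ) {x z w w' : DSub k Γ R A B}
    (hz : (z : A ⊗[k] Aᵐᵒᵖ) = d * x) (hw' : (w' : A ⊗[k] Aᵐᵒᵖ) = w * d) :
    B.theta z w = B.theta x w' := by
  rw [theta_apply, theta_apply, hz, hw', mul_assoc]

theorem theta_apply_eq_mul_of_eq_mul_embRe {z : R ⊗[k] Rᵐᵒᵖ} {x y : DSub k Γ R A B}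
    (hy : (y : A ⊗[k] Aᵐᵒᵖ) = x * embRe k Γ R A B z) (w : DSub k Γ R A B) :
    B.theta y w = B.theta x w * z := by
  rw [theta_apply, theta_apply, hy, embRe_eq_inclE, AlgHom.toLinearMap_apply, ← mul_assoc,
    coeffD_mul_inclE _ _ _ (B.mem_normalForms_of_mem_DSub (mul_mem w.2 x.2)), actE_one]

end GammaBosonization

end

open scoped TensorProduct in
theorem statement12_general (k Γ R A : Type) [Field k]
    [Group Γ] [Fintype Γ] [DecidableEq Γ] [Ring R] [Algebra k R]
    [Ring A] [HopfAlgebra k A] (B : GammaBosonization k Γ R A) :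
    ∃ Θ : ↥(DSub k Γ R A B) → (↥(DSub k Γ R A B) →ₗ[k] (R ⊗[k] Rᵐᵒᵖ)),
      -- `Θ` is `k`-linear:
      (∀ x y, Θ (x + y) = Θ x + Θ y) ∧ (∀ (c : k) (x), Θ (c • x) = c • Θ x) ∧
      -- `Θ` is a bijection onto `Hom_{R^e}(𝒟, R^e)`:
      Function.Injective Θ ∧
      (∀ x, IsReLinear k Γ R A B (Θ x)) ∧
      (∀ F : ↥(DSub k Γ R A B) →ₗ[k] (R ⊗[k] Rᵐᵒᵖ),
        IsReLinear k Γ R A B F → ∃ x, Θ x = F) ∧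
      -- `Θ` is left `A`-linear, where `a` acts on `𝒟` by left multiplication by `ρ(a)`
      -- and on `Hom_{R^e}(𝒟, R^e)` by `(a ⋅ F)(y) = F(y ⋅ ρ(a))`:
      (∀ (a : A) (x z : ↥(DSub k Γ R A B)),
        (z : A ⊗[k] Aᵐᵒᵖ) = hopfRho k A a * (x : A ⊗[k] Aᵐᵒᵖ) →
          ∀ (w w' : ↥(DSub k Γ R A B)),
            (w' : A ⊗[k] Aᵐᵒᵖ) = (w : A ⊗[k] Aᵐᵒᵖ) * hopfRho k A a →
              Θ z w = Θ x w') ∧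
      -- `Θ` is right `R^e`-linear:
      (∀ (z : R ⊗[k] Rᵐᵒᵖ) (x y : ↥(DSub k Γ R A B)),
        (y : A ⊗[k] Aᵐᵒᵖ) = (x : A ⊗[k] Aᵐᵒᵖ) * embRe k Γ R A B z →
          ∀ w, Θ y w = Θ x w * z) := by
  exact ⟨B.theta, map_add B.theta, map_smul B.theta, B.theta_injective, B.isReLinear_theta,
    fun _ hF => B.exists_theta_eq hF, fun _ _ _ hz _ _ hw' => B.theta_apply_eq_of_mul_eq _ hz hw',
    fun _ _ _ hy => B.theta_apply_eq_mul_of_eq_mul_embRe hy⟩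

open scoped TensorProduct in
/-- **Statement 12** (Lemma `lem fgp`).
For `A = R # kΓ` and `𝒟 ⊆ A^e` the subalgebra generated by the `(r#g) ⊗ (s#g⁻¹)`, one has
`Hom_{R^e}(𝒟, R^e) ≅ 𝒟` as `A`-`R^e`-bimodules: there is a `k`-linear bijection `Θ` from
`𝒟` onto the space of left `R^e`-linear maps `𝒟 → R^e` which intertwines the left
`A`-module structures (`ρ(a)⋅` on `𝒟`; `(a ⋅ F)(y) = F(y ⋅ ρ(a))` on the Hom-space,
induced from the right `A`-module structure of `𝒟`) and the right `R^e`-module structures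
(right multiplication through `R^e → A^e` on `𝒟`; `(F ⋅ z)(y) = F(y) z` on the
Hom-space). -/
theorem statement12 (k Γ R A : Type) [Field k] [CharZero k] [IsAlgClosed k]
    [Group Γ] [Fintype Γ] [DecidableEq Γ] [Ring R] [Algebra k R]
    [Ring A] [HopfAlgebra k A] (B : GammaBosonization k Γ R A) :
    ∃ Θ : ↥(DSub k Γ R A B) → (↥(DSub k Γ R A B) →ₗ[k] (R ⊗[k] Rᵐᵒᵖ)),
      -- `Θ` is `k`-linear:
      (∀ x y, Θ (x + y) = Θ x + Θ y) ∧ (∀ (c : k) (x), Θ (c • x) = c • Θ x) ∧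
      -- `Θ` is a bijection onto `Hom_{R^e}(𝒟, R^e)`:
      Function.Injective Θ ∧
      (∀ x, IsReLinear k Γ R A B (Θ x)) ∧
      (∀ F : ↥(DSub k Γ R A B) →ₗ[k] (R ⊗[k] Rᵐᵒᵖ),
        IsReLinear k Γ R A B F → ∃ x, Θ x = F) ∧
      -- `Θ` is left `A`-linear, where `a` acts on `𝒟` by left multiplication by `ρ(a)`
      -- and on `Hom_{R^e}(𝒟, R^e)` by `(a ⋅ F)(y) = F(y ⋅ ρ(a))`:
      (∀ (a : A) (x z : ↥(DSub k Γ R A B)),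
        (z : A ⊗[k] Aᵐᵒᵖ) = hopfRho k A a * (x : A ⊗[k] Aᵐᵒᵖ) →
          ∀ (w w' : ↥(DSub k Γ R A B)),
            (w' : A ⊗[k] Aᵐᵒᵖ) = (w : A ⊗[k] Aᵐᵒᵖ) * hopfRho k A a →
              Θ z w = Θ x w') ∧
      -- `Θ` is right `R^e`-linear:
      (∀ (z : R ⊗[k] Rᵐᵒᵖ) (x y : ↥(DSub k Γ R A B)),
        (y : A ⊗[k] Aᵐᵒᵖ) = (x : A ⊗[k] Aᵐᵒᵖ) * embRe k Γ R A B z →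
          ∀ w, Θ y w = Θ x w * z) :=
  statement12_general k Γ R A B
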